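/- For the single-site zero-field recursion g(z) = (k−1)·F_β(z) with k ≥ 2: if (k−1)·tanh(β) > 1 then g has a fixed point z̄ > 0, while if (k−1)·tanh(β) < 1 then 0 is the only fixed point of g in ℝ. -/

import Mathlib

noncomputable def artanh (x : ℝ) : ℝ := Real.log ((1 + x) / (1 - x)) / 2

noncomputable def F (β x : ℝ) : ℝ := artanh (Real.tanh β * Real.tanh x)

/-!
Write `g z = c * F β z` with `c = k - 1` and `t = tanh β`. Then `g 0 = 0`, `g` is bounded
(since `|F β z| ≤ artanh |t|`), and the derivative of `F β` at `x` is `t * q x` with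
`0 < q x ≤ 1`, `q 0 = 1`.
If `c * t > 1`, then `g z - z` is positive for small `z > 0` (its slope at `0` is `c * t - 1`) and
negative for large `z` (boundedness), so it vanishes in between. If `c * t < 1`, then
`g' = (c * t) * q < 1` everywhere, so `z - g z` is strictly increasing and vanishes only at `0`.
-/

open Real Filter Set Topology

theorem exists_pos_fixedPoint_of_one_lt_deriv {f : ℝ → ℝ} {f' B : ℝ} (hf : Continuous f)
    (h0 : f 0 = 0) (hf' : HasDerivAt f f' 0) (h1 : 1 < f') (hB : ∀ z, f z ≤ B) :
    ∃ z, 0 < z ∧ f z = z := by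
  have hslope := ((hf'.fun_sub (hasDerivAt_id' 0)).tendsto_slope_zero_right).eventually
    (eventually_gt_nhds (sub_pos.mpr h1))
  obtain ⟨ε, hslope, hεpos⟩ := (hslope.and self_mem_nhdsWithin).exists
  have hε : ε < f ε := by
    simp only [zero_add, h0, sub_zero, smul_eq_mul] at hslope
    have := mul_pos hεpos hslope
    rw [mul_inv_cancel_left₀ (ne_of_gt hεpos)] at this
    linarith
  have hM : f (max ε (B + 1)) < max ε (B + 1) :=
    (hB _).trans_lt ((lt_add_one B).trans_le (le_max_right _ _))
  obtain ⟨z, hz, hfz⟩ := intermediate_value_Icc' (le_max_left ε (B + 1))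
    (hf.sub continuous_id).continuousOn ⟨(sub_neg.mpr hM).le, (sub_pos.mpr hε).le⟩
  exact ⟨z, hεpos.trans_le hz.1, sub_eq_zero.mp hfz⟩

theorem eq_zero_of_fixedPoint_of_deriv_lt_one {f f' : ℝ → ℝ} (hf : ∀ x, HasDerivAt f (f' x) x)
    (hf' : ∀ x, f' x < 1) (h0 : f 0 = 0) {z : ℝ} (hz : f z = z) : z = 0 :=
  (strictMono_of_hasDerivAt_pos (fun x => (hasDerivAt_id' x).sub (hf x))
    (fun x => sub_pos.mpr (hf' x))).injective (by simp [hz, h0])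

theorem Real.hasDerivAt_tanh (x : ℝ) : HasDerivAt tanh (1 - tanh x ^ 2) x := by
  have h := (hasDerivAt_sinh x).div (hasDerivAt_cosh x) (cosh_pos x).ne'
  rw [show sinh / cosh = tanh from funext fun y => (tanh_eq_sinh_div_cosh y).symm] at h
  refine h.congr_deriv ?_
  rw [tanh_eq_sinh_div_cosh]
  field_simp

theorem Real.hasDerivAt_artanh {x : ℝ} (hx : x ∈ Ioo (-1) 1) :
    HasDerivAt Real.artanh (1 - x ^ 2)⁻¹ x := by
  have h1 : 0 < 1 + x := by grind
  have h2 : 0 < 1 - x := by grind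
  have h := (((hasDerivAt_id' x).const_add 1).fun_div ((hasDerivAt_id' x).const_sub 1)
    h2.ne').log (div_pos h1 h2).ne' |>.const_mul (1 / 2)
  refine (h.congr_of_eventuallyEq ?_).congr_deriv ?_
  · filter_upwards [isOpen_Ioo.mem_nhds hx] with y hy
    exact artanh_eq_half_log (Ioo_subset_Icc_self hy)
  · rw [show 1 - x ^ 2 = (1 + x) * (1 - x) by ring]
    field_simp
    ring

theorem Real.artanh_neg_eq (x : ℝ) : Real.artanh (-x) = -Real.artanh x := by
  rw [Real.artanh, Real.artanh, ← Real.log_inv, ← Real.sqrt_inv, inv_div, sub_neg_eq_add,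
    ← sub_eq_add_neg]

theorem Real.abs_artanh (x : ℝ) : |Real.artanh x| = Real.artanh |x| := by
  rcases le_total 0 x with hx | hx
  · rw [abs_of_nonneg hx, abs_of_nonneg (artanh_nonneg hx)]
  · rw [abs_of_nonpos hx, abs_of_nonpos (artanh_nonpos hx), artanh_neg_eq]

theorem abs_tanh_mul_tanh_lt_one (β x : ℝ) : |tanh β * tanh x| < 1 := by
  rw [abs_mul]
  exact mul_lt_one_of_nonneg_of_lt_one_left (abs_nonneg _) (abs_tanh_lt_one β)
    (abs_tanh_lt_one x).le

theorem F_eq_artanh (β x : ℝ) : F β x = Real.artanh (tanh β * tanh x) := by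
  rw [F, _root_.artanh, Real.artanh_eq_half_log (Ioo_subset_Icc_self
    (abs_lt.mp (abs_tanh_mul_tanh_lt_one β x))), one_div_mul_eq_div]

theorem F_zero (β : ℝ) : F β 0 = 0 := by
  simp [F_eq_artanh]

theorem abs_F_le (β x : ℝ) : |F β x| ≤ Real.artanh |tanh β| := by
  rw [F_eq_artanh, Real.abs_artanh]
  refine artanh_le_artanh (by linarith [abs_nonneg (tanh β * tanh x)]) (abs_tanh_lt_one β) ?_
  rw [abs_mul]
  exact mul_le_of_le_one_right (abs_nonneg _) (abs_tanh_lt_one x).le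

theorem hasDerivAt_F (β x : ℝ) :
    HasDerivAt (F β) (tanh β * ((1 - tanh x ^ 2) / (1 - (tanh β * tanh x) ^ 2))) x := by
  have h := (Real.hasDerivAt_artanh (abs_lt.mp (abs_tanh_mul_tanh_lt_one β x))).comp x
    ((Real.hasDerivAt_tanh x).const_mul (tanh β))
  rw [show F β = _ from funext (F_eq_artanh β)]
  exact h.congr_deriv (by ring)

theorem F_deriv_factor_mem_Ioc (β x : ℝ) :
    (1 - tanh x ^ 2) / (1 - (tanh β * tanh x) ^ 2) ∈ Ioc 0 1 := by
  have hx := tanh_sq_lt_one x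
  have hβ := tanh_sq_lt_one β
  have hle : 1 - tanh x ^ 2 ≤ 1 - (tanh β * tanh x) ^ 2 := by
    nlinarith [sq_nonneg (tanh x)]
  exact ⟨div_pos (by linarith) (by linarith), div_le_one_of_le₀ hle (by linarith)⟩

theorem stmt_16_general (β : ℝ) (k : ℕ) :
    (((k : ℝ) - 1) * Real.tanh β > 1 →
      ∃ z : ℝ, 0 < z ∧ ((k : ℝ) - 1) * F β z = z) ∧
    (((k : ℝ) - 1) * Real.tanh β < 1 →
      ∀ z : ℝ, ((k : ℝ) - 1) * F β z = z → z = 0) := by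
  set c : ℝ := (k : ℝ) - 1
  have hg x : HasDerivAt (fun z => c * F β z)
      (c * tanh β * ((1 - tanh x ^ 2) / (1 - (tanh β * tanh x) ^ 2))) x := by
    simpa only [mul_assoc] using (hasDerivAt_F β x).const_mul c
  have hg0 : c * F β 0 = 0 := by rw [F_zero, mul_zero]
  refine ⟨fun hc => ?_, fun hc z hz => ?_⟩
  · refine exists_pos_fixedPoint_of_one_lt_deriv
      (continuous_iff_continuousAt.mpr fun x => (hg x).continuousAt) hg0
      (by simpa using hg 0) hc (B := |c| * Real.artanh |tanh β|) fun z => ?_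
    exact (le_abs_self _).trans (by rw [abs_mul]; gcongr; exact abs_F_le β z)
  · refine eq_zero_of_fixedPoint_of_deriv_lt_one hg (fun x => ?_) hg0 hz
    obtain ⟨hpos, hle⟩ := F_deriv_factor_mem_Ioc β x
    nlinarith

theorem stmt_16 (β : ℝ) (k : ℕ) (hk : 2 ≤ k) :
    (((k : ℝ) - 1) * Real.tanh β > 1 →
      ∃ z : ℝ, 0 < z ∧ ((k : ℝ) - 1) * F β z = z) ∧
    (((k : ℝ) - 1) * Real.tanh β < 1 →
      ∀ z : ℝ, ((k : ℝ) - 1) * F β z = z → z = 0) :=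
  stmt_16_general β k
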